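/- If a real Banach space X is almost isometric to a separable Gurariy space G, then X is isometrically isomorphic to G, i.e., there exists a surjective linear isometry from X onto G. -/

import Mathlib

open TopologicalSpace

/-- `T` is an `ε`-isometry: `(1+ε)⁻¹‖x‖ ≤ ‖T x‖ ≤ (1+ε)‖x‖` for all `x`. -/
def IsEpsIsometry {X Y : Type*} [NormedAddCommGroup X] [NormedAddCommGroup Y]
    (ε : ℝ) (T : X → Y) : Prop :=
  ∀ x : X, (1 + ε)⁻¹ * ‖x‖ ≤ ‖T x‖ ∧ ‖T x‖ ≤ (1 + ε) * ‖x‖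

/-- `X` and `Y` are almost isometric: for every `ε > 0` there is a surjective linear
`ε`-isometry from `X` onto `Y`. -/
def AlmostIsometric (X Y : Type*) [NormedAddCommGroup X] [NormedSpace ℝ X]
    [NormedAddCommGroup Y] [NormedSpace ℝ Y] : Prop :=
  ∀ ε : ℝ, 0 < ε → ∃ T : X →ₗ[ℝ] Y, Function.Surjective T ∧ IsEpsIsometry ε ⇑T

/-- `X` is a Gurariy space: for every `ε > 0`, every pair of finite-dimensional normed
spaces `E ⊆ F` and every linear isometric embedding `T : E → X`, there is a linear
extension `S : F → X` of `T` which is an `ε`-isometry. -/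
def IsGurariy (X : Type*) [NormedAddCommGroup X] [NormedSpace ℝ X] : Prop :=
  ∀ ε : ℝ, 0 < ε →
    ∀ (F : Type) [NormedAddCommGroup F] [NormedSpace ℝ F] [FiniteDimensional ℝ F]
      (E : Subspace ℝ F) (T : E →ₗ[ℝ] X),
      (∀ e : E, ‖T e‖ = ‖e‖) →
      ∃ S : F →ₗ[ℝ] X, (∀ e : E, S e = T e) ∧ IsEpsIsometry ε ⇑S

/-- `Y` is an almost isometric ideal (a.i.-ideal) in `X`. -/
def IsAIIdeal {X : Type*} [NormedAddCommGroup X] [NormedSpace ℝ X]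
    (Y : Subspace ℝ X) : Prop :=
  IsClosed (Y : Set X) ∧
  ∀ ε : ℝ, 0 < ε → ∀ E : Subspace ℝ X, FiniteDimensional ℝ E →
    ∃ T : E →ₗ[ℝ] Y, (∀ e : E, (e : X) ∈ Y → ((T e : Y) : X) = (e : X)) ∧
      IsEpsIsometry ε ⇑T

/-!
A back-and-forth argument. By the Gurariy property, a `δ`-isometry from a subspace `E` of a
finite-dimensional `F` into `G` is, on `E`, within `2δ` of an `ε`-isometry defined on all of `F`:
apply the property to an amalgamation of `F` and `G` over `E` in which the two copies of `E` are
only `δ`-close. Composing with surjective near-isometries `X → G`, the same holds with target `X`.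
Alternately extending a near-isometry `Eₙ → G` and an approximate inverse of it, with tolerances
halving at each step, gives maps that converge on the dense subspace `⋃ Eₙ` of `X` to a linear
isometry with dense range in `G`; its extension to `X` is onto since `X` is complete.
-/

open Filter Topology Set Submodule

section EpsIsometry

variable {X Y Z : Type*} [NormedAddCommGroup X] [NormedAddCommGroup Y] [NormedAddCommGroup Z]

def IsEpsIsometryOn (ε : ℝ) (T : X → Y) (s : Set X) : Prop :=
  ∀ x ∈ s, (1 + ε)⁻¹ * ‖x‖ ≤ ‖T x‖ ∧ ‖T x‖ ≤ (1 + ε) * ‖x‖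

variable {ε ε' : ℝ} {T : X → Y} {s : Set X}

theorem IsEpsIsometry.isEpsIsometryOn (h : IsEpsIsometry ε T) : IsEpsIsometryOn ε T s :=
  fun x _ => h x

namespace IsEpsIsometryOn

theorem norm_apply_le (h : IsEpsIsometryOn ε T s) {x : X} (hx : x ∈ s) :
    ‖T x‖ ≤ (1 + ε) * ‖x‖ :=
  (h x hx).2

theorem norm_le_norm_apply (h : IsEpsIsometryOn ε T s) (hε : 0 ≤ ε) {x : X} (hx : x ∈ s) :
    ‖x‖ ≤ (1 + ε) * ‖T x‖ :=
  (inv_mul_le_iff₀ (by linarith)).1 (h x hx).1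

theorem mono (h : IsEpsIsometryOn ε T s) (hε : 0 ≤ ε) (hεε' : ε ≤ ε') :
    IsEpsIsometryOn ε' T s := fun x hx =>
  ⟨le_trans (by gcongr) (h x hx).1,
    (h.norm_apply_le hx).trans (by gcongr)⟩

/-- The factors `1 + ε` multiply under composition. -/
theorem comp {S : Y → Z} {ε₁ ε₂ : ℝ} (hS : IsEpsIsometry ε₂ S) (hT : IsEpsIsometryOn ε₁ T s)
    (h₂ : 0 ≤ ε₂) : IsEpsIsometryOn (ε₁ + ε₂ + ε₁ * ε₂) (S ∘ T) s := by
  intro x hx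
  obtain ⟨hT₁, hT₂⟩ := hT x hx
  obtain ⟨hS₁, hS₂⟩ := hS (T x)
  rw [show 1 + (ε₁ + ε₂ + ε₁ * ε₂) = (1 + ε₂) * (1 + ε₁) by ring, mul_inv, mul_assoc, mul_assoc]
  exact ⟨(mul_le_mul_of_nonneg_left hT₁ (inv_nonneg.2 (by linarith))).trans hS₁,
    hS₂.trans (mul_le_mul_of_nonneg_left hT₂ (by linarith))⟩

end IsEpsIsometryOn

variable [NormedSpace ℝ X] [NormedSpace ℝ Y]

theorem IsEpsIsometry.injective {T : X →ₗ[ℝ] Y} (h : IsEpsIsometry ε T) (hε : 0 ≤ ε) :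
    Function.Injective T :=
  (injective_iff_map_eq_zero T).2 fun x hx => norm_le_zero_iff.1 <| by
    simpa [hx] using h.isEpsIsometryOn.norm_le_norm_apply hε (mem_univ x)

theorem IsEpsIsometry.symm (e : X ≃ₗ[ℝ] Y) (h : IsEpsIsometry ε e) (hε : 0 ≤ ε) :
    IsEpsIsometry ε e.symm := fun y => by
  have hy := h (e.symm y)
  rw [e.apply_symm_apply] at hy
  exact ⟨(inv_mul_le_iff₀ (by linarith)).2 hy.2, (inv_mul_le_iff₀ (by linarith)).1 hy.1⟩

theorem IsEpsIsometryOn.exists_leftInverse {A : Submodule ℝ X} {u : X →ₗ[ℝ] Y}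
    (hu : IsEpsIsometryOn ε u A) (hε : 0 ≤ ε) :
    ∃ w : Y →ₗ[ℝ] X, (∀ a ∈ A, w (u a) = a) ∧ IsEpsIsometryOn ε w (A.map u) := by
  have hinj : IsEpsIsometry ε (u ∘ₗ A.subtype) := fun a => hu a a.2
  obtain ⟨g, hg⟩ := (u ∘ₗ A.subtype).exists_leftInverse_of_injective
    (LinearMap.ker_eq_bot.2 (hinj.injective hε))
  have hgu : ∀ a ∈ A, (A.subtype ∘ₗ g) (u a) = a := fun a ha =>
    congr_arg Subtype.val (LinearMap.congr_fun hg ⟨a, ha⟩)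
  refine ⟨A.subtype ∘ₗ g, hgu, ?_⟩
  rintro _ ⟨a, ha, rfl⟩
  rw [hgu a ha]
  exact ⟨(inv_mul_le_iff₀ (by linarith)).2 (hu.norm_apply_le ha), hu.norm_le_norm_apply hε ha⟩

theorem AlmostIsometric.exists_linearEquiv (h : AlmostIsometric X Y) (hε : 0 < ε) :
    ∃ e : X ≃ₗ[ℝ] Y, IsEpsIsometry ε e ∧ IsEpsIsometry ε e.symm := by
  obtain ⟨T, hT_surj, hT⟩ := h ε hε
  let e := LinearEquiv.ofBijective T ⟨hT.injective hε.le, hT_surj⟩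
  exact ⟨e, hT, IsEpsIsometry.symm e hT hε.le⟩

theorem AlmostIsometric.separableSpace [SeparableSpace Y] (h : AlmostIsometric X Y) :
    SeparableSpace X := by
  obtain ⟨e, -, he⟩ := h.exists_linearEquiv one_pos
  exact e.symm.surjective.denseRange.separableSpace
    (AddMonoidHomClass.continuous_of_bound e.symm (1 + 1) fun y => (he y).2)

end EpsIsometry

/-- A copy of `M` on which a norm other than the one `M` may carry can be installed. -/
def NormSynonym (M : Type*) : Type _ := M

instance {M : Type*} [AddCommGroup M] : AddCommGroup (NormSynonym M) := ‹AddCommGroup M›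

instance {M : Type*} [AddCommGroup M] [Module ℝ M] : Module ℝ (NormSynonym M) := ‹Module ℝ M›

def NormSynonym.linearEquiv (M : Type*) [AddCommGroup M] [Module ℝ M] :
    M ≃ₗ[ℝ] NormSynonym M :=
  LinearEquiv.refl ℝ M

theorem IsGurariy.exists_extension {G : Type*} [NormedAddCommGroup G] [NormedSpace ℝ G]
    (hG : IsGurariy G) {ε : ℝ} (hε : 0 < ε)
    (F : Type*) [NormedAddCommGroup F] [NormedSpace ℝ F] [FiniteDimensional ℝ F]
    (E : Submodule ℝ F) (T : E →ₗ[ℝ] G) (hT : ∀ e : E, ‖T e‖ = ‖e‖) :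
    ∃ S : F →ₗ[ℝ] G, (∀ e : E, S e = T e) ∧ IsEpsIsometry ε S := by
  -- `IsGurariy` only speaks about spaces in `Type`; transport `F` to a norm on `ℝⁿ`.
  let V := NormSynonym (Fin (Module.finrank ℝ F) → ℝ)
  let φ : V ≃ₗ[ℝ] F := (NormSynonym.linearEquiv _).symm ≪≫ₗ (Module.finBasis ℝ F).equivFun.symm
  let _ : NormedAddCommGroup V := NormedAddCommGroup.induced V F φ φ.injective
  let _ : NormedSpace ℝ V := NormedSpace.induced ℝ V F φ
  have : FiniteDimensional ℝ V := Module.Finite.equiv φ.symm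
  let E₀ : Submodule ℝ V := E.comap φ.toLinearMap
  let r : E₀ →ₗ[ℝ] E := φ.toLinearMap.restrict fun _ hx => hx
  obtain ⟨S₀, hS₀T, hS₀⟩ := hG ε hε V E₀ (T ∘ₗ r) fun e => hT (r e)
  refine ⟨S₀ ∘ₗ φ.symm.toLinearMap, fun e => ?_, fun x => ?_⟩
  · have he : φ.symm e ∈ E₀ := by simp [E₀]
    exact (hS₀T ⟨_, he⟩).trans (congr_arg T (Subtype.ext (φ.apply_symm_apply e)))
  · have hφ : ‖φ.symm x‖ = ‖x‖ := congr_arg norm (φ.apply_symm_apply x)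
    rw [← hφ]; exact hS₀ (φ.symm x)

section Amalgamation

variable {F G : Type*} [NormedAddCommGroup F] [NormedSpace ℝ F]
  [NormedAddCommGroup G] [NormedSpace ℝ G] {E : Submodule ℝ F} {δ : ℝ} {f : E →ₗ[ℝ] G}

/-- A norm on `F × E` making `v ↦ (v, 0)` an isometry of `F`, `a ↦ (0, a)` an isometric copy of
`f`, and `(a, -a)` of norm at most `δ ‖a‖`: an approximate pushout of `F ⊇ E → G`, small enough
(finite-dimensional) to be fed to the Gurariy property. -/
noncomputable def amalgamNorm (δ : ℝ) (f : E →ₗ[ℝ] G) (p : F × E) : ℝ :=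
  ⨅ e : E, ‖p.1 - e‖ + ‖f (p.2 + e)‖ + δ * ‖e‖

theorem amalgamNorm_le (hδ : 0 ≤ δ) (p : F × E) (e : E) :
    amalgamNorm δ f p ≤ ‖p.1 - e‖ + ‖f (p.2 + e)‖ + δ * ‖e‖ :=
  ciInf_le ⟨0, by rintro _ ⟨e, rfl⟩; positivity⟩ e

theorem le_amalgamNorm {c : ℝ} {p : F × E}
    (h : ∀ e : E, c ≤ ‖p.1 - e‖ + ‖f (p.2 + e)‖ + δ * ‖e‖) : c ≤ amalgamNorm δ f p :=
  le_ciInf h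

theorem amalgamNorm_nonneg (hδ : 0 ≤ δ) (p : F × E) : 0 ≤ amalgamNorm δ f p :=
  le_amalgamNorm fun _ => by positivity

theorem amalgamNorm_zero (hδ : 0 ≤ δ) : amalgamNorm δ f 0 = 0 :=
  le_antisymm (by simpa using amalgamNorm_le (f := f) hδ 0 0) (amalgamNorm_nonneg hδ 0)

theorem amalgamNorm_add_le (hδ : 0 ≤ δ) (p q : F × E) :
    amalgamNorm δ f (p + q) ≤ amalgamNorm δ f p + amalgamNorm δ f q :=
  le_ciInf_add_ciInf fun e e' => (amalgamNorm_le hδ _ (e + e')).trans <| by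
    have h₁ : (p + q).1 - ↑(e + e') = (p.1 - e) + (q.1 - e') := by
      simp only [Prod.fst_add, coe_add]; abel
    have h₂ : f ((p + q).2 + (e + e')) = f (p.2 + e) + f (q.2 + e') := by
      rw [← map_add, Prod.snd_add, add_add_add_comm]
    rw [h₁, h₂]
    have := norm_add_le (p.1 - e) (q.1 - e')
    have := norm_add_le (f (p.2 + e)) (f (q.2 + e'))
    have := mul_le_mul_of_nonneg_left (norm_add_le e e') hδ
    linarith

theorem amalgamNorm_neg (p : F × E) : amalgamNorm δ f (-p) = amalgamNorm δ f p := by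
  rw [amalgamNorm, ← (Equiv.neg E).surjective.iInf_comp]
  congr 1; ext e
  have h₁ : (-p).1 - ((-e : E) : F) = -(p.1 - e) := by rw [Prod.fst_neg, NegMemClass.coe_neg]; abel
  have h₂ : (-p).2 + -e = -(p.2 + e) := by rw [Prod.snd_neg, neg_add]
  simp only [Equiv.neg_apply, h₁, h₂, map_neg, norm_neg]

theorem amalgamNorm_smul_le (hδ : 0 ≤ δ) (c : ℝ) (p : F × E) :
    amalgamNorm δ f (c • p) ≤ |c| * amalgamNorm δ f p := by
  conv_rhs => rw [amalgamNorm, Real.mul_iInf_of_nonneg (abs_nonneg c)]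
  refine le_ciInf fun e => (amalgamNorm_le hδ _ (c • e)).trans (le_of_eq ?_)
  simp only [Prod.smul_fst, Prod.smul_snd, coe_smul, ← smul_sub, ← smul_add, map_smul,
    norm_smul, Real.norm_eq_abs]
  ring

theorem amalgamNorm_inl (hδ : 0 ≤ δ) (hf : IsEpsIsometry δ f) (v : F) :
    amalgamNorm δ f (v, 0) = ‖v‖ := by
  refine le_antisymm (by simpa using amalgamNorm_le (f := f) hδ (v, 0) 0) (le_amalgamNorm ?_)
  intro e
  have hv : ‖v‖ ≤ ‖v - e‖ + ‖e‖ := norm_le_norm_sub_add v e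
  have he : ‖e‖ ≤ (1 + δ) * ‖f e‖ := hf.isEpsIsometryOn.norm_le_norm_apply hδ (mem_univ e)
  have : ‖e‖ ≤ ‖f e‖ + δ * ‖e‖ := by
    rcases le_total ‖e‖ ‖f e‖ with h | h <;> nlinarith [norm_nonneg e]
  rw [zero_add]
  linarith

theorem amalgamNorm_inr (hδ : 0 ≤ δ) (hf : IsEpsIsometry δ f) (a : E) :
    amalgamNorm δ f (0, a) = ‖f a‖ := by
  refine le_antisymm (by simpa using amalgamNorm_le (f := f) hδ (0, a) 0) (le_amalgamNorm ?_)
  intro e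
  have ha : ‖f a‖ ≤ ‖f (a + e)‖ + ‖f e‖ := by
    simpa using norm_sub_le (f (a + e)) (f e)
  have he := (hf e).2
  simp only [zero_sub, norm_neg, coe_norm] at he ⊢
  linarith

theorem amalgamNorm_antidiagonal (hδ : 0 ≤ δ) (a : E) :
    amalgamNorm δ f ((a : F), -a) ≤ δ * ‖a‖ := by
  simpa using amalgamNorm_le (f := f) hδ ((a : F), -a) a

theorem eq_zero_of_amalgamNorm_eq_zero (hδ : 0 < δ) (hf : IsEpsIsometry δ f) {p : F × E}
    (hp : amalgamNorm δ f p = 0) : p = 0 := by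
  have key : δ * (‖p.1‖ + ‖f p.2‖) ≤ (δ + 2) * amalgamNorm δ f p := by
    rw [amalgamNorm, Real.mul_iInf_of_nonneg (by linarith)]
    refine le_ciInf fun e => ?_
    have h₁ : ‖p.1‖ ≤ ‖p.1 - e‖ + ‖e‖ := norm_le_norm_sub_add _ _
    have h₂ : ‖f p.2‖ ≤ ‖f (p.2 + e)‖ + ‖f e‖ := by simpa using norm_sub_le (f (p.2 + e)) (f e)
    have h₃ := (hf e).2
    nlinarith [norm_nonneg (p.1 - e), norm_nonneg (f (p.2 + e)), norm_nonneg e]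
  rw [hp, mul_zero] at key
  have h₁ : ‖p.1‖ = 0 := by nlinarith [norm_nonneg p.1, norm_nonneg (f p.2)]
  have h₂ : f p.2 = 0 := norm_eq_zero.1 (by nlinarith [norm_nonneg p.1, norm_nonneg (f p.2)])
  exact Prod.ext (norm_eq_zero.1 h₁) ((hf.injective hδ.le).eq_iff' (map_zero f) |>.1 h₂)

noncomputable def amalgamAddGroupNorm (hδ : 0 < δ) (hf : IsEpsIsometry δ f) :
    AddGroupNorm (NormSynonym (F × E)) where
  toFun p := amalgamNorm δ f p
  map_zero' := amalgamNorm_zero hδ.le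
  add_le' := amalgamNorm_add_le hδ.le
  neg' := amalgamNorm_neg
  eq_zero_of_map_eq_zero' _ := eq_zero_of_amalgamNorm_eq_zero hδ hf

end Amalgamation

theorem IsGurariy.exists_near_extension {F G : Type*} [NormedAddCommGroup F] [NormedSpace ℝ F]
    [FiniteDimensional ℝ F] [NormedAddCommGroup G] [NormedSpace ℝ G] (hG : IsGurariy G)
    {δ ε : ℝ} (hδ : 0 < δ) (hε : 0 < ε) (E : Submodule ℝ F) (f : E →ₗ[ℝ] G)
    (hf : IsEpsIsometry δ f) :
    ∃ g : F →ₗ[ℝ] G, IsEpsIsometry ε g ∧ ∀ e : E, ‖g e - f e‖ ≤ (1 + ε) * δ * ‖e‖ := by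
  let W := NormSynonym (F × E)
  let _ : NormedAddCommGroup W := (amalgamAddGroupNorm hδ hf).toNormedAddCommGroup
  let _ : NormedSpace ℝ W := ⟨fun c p => amalgamNorm_smul_le hδ.le c p⟩
  let j := NormSynonym.linearEquiv (F × E)
  have : FiniteDimensional ℝ W := Module.Finite.equiv j
  have hj : ∀ p, ‖j p‖ = amalgamNorm δ f p := fun _ => rfl
  let E₀ : Submodule ℝ W := LinearMap.range (j.toLinearMap ∘ₗ LinearMap.inr ℝ F E)
  let T : E₀ →ₗ[ℝ] G := f ∘ₗ LinearMap.snd ℝ F E ∘ₗ j.symm.toLinearMap ∘ₗ E₀.subtype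
  have hT : ∀ w : E₀, ‖T w‖ = ‖w‖ := by
    rintro ⟨_, a, rfl⟩
    exact (amalgamNorm_inr hδ.le hf a).symm
  obtain ⟨S, hST, hS⟩ := hG.exists_extension hε W E₀ T hT
  refine ⟨S ∘ₗ j.toLinearMap ∘ₗ LinearMap.inl ℝ F E, fun v => ?_, fun a => ?_⟩
  · have hv := hS (j (v, 0))
    rw [hj, amalgamNorm_inl hδ.le hf] at hv
    exact hv
  · have hSa : S (j (0, a)) = f a := hST ⟨j (0, a), a, rfl⟩
    have hdiff : S (j (a, 0)) - f a = S (j ((a : F), -a)) := by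
      rw [← hSa, ← map_sub, ← map_sub]
      congr 2
      simp
    calc ‖S (j (a, 0)) - f a‖ = ‖S (j ((a : F), -a))‖ := by rw [hdiff]
      _ ≤ (1 + ε) * amalgamNorm δ f ((a : F), -a) := (hS _).2
      _ ≤ (1 + ε) * (δ * ‖a‖) := by gcongr; exact amalgamNorm_antidiagonal hδ.le a
      _ = (1 + ε) * δ * ‖a‖ := by ring

def ApproxExtensionProperty (Z Y : Type*) [NormedAddCommGroup Z] [NormedSpace ℝ Z]
    [NormedAddCommGroup Y] [NormedSpace ℝ Y] (δ η C : ℝ) : Prop :=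
  ∀ F E : Submodule ℝ Z, FiniteDimensional ℝ F → E ≤ F → ∀ v : Z →ₗ[ℝ] Y,
    IsEpsIsometryOn δ v E →
    ∃ g : Z →ₗ[ℝ] Y, IsEpsIsometryOn η g F ∧ ∀ e ∈ E, ‖g e - v e‖ ≤ C * ‖e‖

section ApproxExtension

variable {Y Z G : Type*} [NormedAddCommGroup Y] [NormedSpace ℝ Y] [NormedAddCommGroup Z]
  [NormedSpace ℝ Z] [NormedAddCommGroup G] [NormedSpace ℝ G] {δ η C : ℝ}

theorem IsGurariy.approxExtensionProperty (hG : IsGurariy G) (hδ : 0 < δ) (hη : 0 < η) :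
    ApproxExtensionProperty Z G δ η (2 * δ) := by
  intro F E hF hEF v hv
  let E' := E.comap F.subtype
  obtain ⟨g, hg, hgv⟩ := hG.exists_near_extension hδ (lt_min hη one_pos) E'
    (v ∘ₗ F.subtype ∘ₗ E'.subtype) fun e => hv _ e.2
  obtain ⟨g', hg'⟩ := LinearMap.exists_extend g
  have hg'g : ∀ z (hz : z ∈ F), g' z = g ⟨z, hz⟩ := fun z hz => LinearMap.congr_fun hg' ⟨z, hz⟩
  refine ⟨g', fun z hz => ?_, fun e he => ?_⟩
  · rw [hg'g z hz]
    exact (hg.isEpsIsometryOn.mono (by positivity) (min_le_left η 1)) ⟨z, hz⟩ (mem_univ _)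
  · rw [hg'g e (hEF he)]
    refine (hgv ⟨⟨e, hEF he⟩, he⟩).trans ?_
    have : 1 + min η 1 ≤ 2 := by linarith [min_le_right η 1]
    simp only [coe_norm]
    gcongr

theorem AlmostIsometric.approxExtensionProperty (hG : IsGurariy G) (hYG : AlmostIsometric Y G)
    (hδ : 0 < δ) (hη : 0 < η) : ApproxExtensionProperty Z Y δ η (12 * δ) := by
  set γ := min (min δ (η / 4)) 1
  have hγ : 0 < γ := lt_min (lt_min hδ (by positivity)) one_pos
  have hγδ : γ ≤ δ := (min_le_left _ _).trans (min_le_left _ _)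
  have hγη : γ ≤ η / 4 := (min_le_left _ _).trans (min_le_right _ _)
  have hγ1 : γ ≤ 1 := min_le_right _ _
  obtain ⟨e, he, he'⟩ := hYG.exists_linearEquiv hγ
  intro F E hF hEF v hv
  obtain ⟨g, hg, hgv⟩ := hG.approxExtensionProperty (δ := δ + γ + δ * γ) (by positivity) hγ F E
    hF hEF (e.toLinearMap ∘ₗ v) (hv.comp he hγ.le :)
  refine ⟨e.symm.toLinearMap ∘ₗ g, (hg.comp he' hγ.le).mono (by positivity) (by nlinarith),
    fun z hz => ?_⟩
  have hez : e.symm (g z) - v z = e.symm (g z - e (v z)) := by simp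
  calc ‖e.symm (g z) - v z‖ = ‖e.symm (g z - e (v z))‖ := by rw [hez]
    _ ≤ (1 + γ) * ‖g z - e (v z)‖ := (he' _).2
    _ ≤ (1 + γ) * (2 * (δ + γ + δ * γ) * ‖z‖) := by gcongr; exact hgv z hz
    _ ≤ 2 * (2 * (3 * δ) * ‖z‖) := by
      have : δ * γ ≤ δ := by nlinarith
      have := norm_nonneg z
      apply mul_le_mul (by linarith) _ (by positivity) zero_le_two
      gcongr
      linarith
    _ = 12 * δ * ‖z‖ := by ring

theorem ApproxExtensionProperty.exists_approx_inverse (hZY : ApproxExtensionProperty Z Y δ η C)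
    (hδ : 0 ≤ δ) {A : Submodule ℝ Y} [FiniteDimensional ℝ A] (B : Submodule ℝ Z)
    [FiniteDimensional ℝ B] {u : Y →ₗ[ℝ] Z} (hu : IsEpsIsometryOn δ u A) :
    ∃ g : Z →ₗ[ℝ] Y, IsEpsIsometryOn η g ↑(A.map u ⊔ B) ∧ ∀ a ∈ A, ‖g (u a) - a‖ ≤ C * ‖u a‖ := by
  obtain ⟨w, hwu, hw⟩ := hu.exists_leftInverse hδ
  obtain ⟨g, hg, hgw⟩ := hZY (A.map u ⊔ B) (A.map u) inferInstance le_sup_left w hw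
  exact ⟨g, hg, fun a ha => by simpa only [hwu a ha] using hgw (u a) (mem_map_of_mem ha)⟩

end ApproxExtension

theorem exists_backAndForth_step {X G : Type*} [NormedAddCommGroup X] [NormedSpace ℝ X]
    [NormedAddCommGroup G] [NormedSpace ℝ G] (hG : IsGurariy G) (hXG : AlmostIsometric X G)
    {δ : ℝ} (hδ : 0 < δ) (hδ' : δ ≤ 1 / 4) {E : Submodule ℝ X} [FiniteDimensional ℝ E]
    {f : X →ₗ[ℝ] G} (hf : IsEpsIsometryOn δ f E) (x' : X) (y' : G) :
    ∃ (E' : Submodule ℝ X) (f' : X →ₗ[ℝ] G), FiniteDimensional ℝ E' ∧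
      IsEpsIsometryOn (δ / 2) f' E' ∧ E ≤ E' ∧ x' ∈ E' ∧
      (∀ x ∈ E, ‖f' x - f x‖ ≤ 20 * δ * ‖x‖) ∧
      ∃ w ∈ E', ‖f' w - y'‖ ≤ δ * ‖y'‖ ∧ ‖w‖ ≤ 2 * ‖y'‖ := by
  -- forth: `g` approximately inverts `f` and is defined on `f(E) + ℝ y'`
  obtain ⟨g, hg, hgf⟩ := (hXG.approxExtensionProperty hG hδ (η := δ / 4) (by positivity)
    ).exists_approx_inverse hδ.le (ℝ ∙ y') hf
  set F' := E.map f ⊔ ℝ ∙ y'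
  -- back: `f'` approximately inverts `g` and is defined on `g(F') + E + ℝ x'`
  obtain ⟨f', hf', hf'g⟩ := (hG.approxExtensionProperty (Z := X) (δ := δ / 4) (η := δ / 2)
    (by positivity) (by positivity)).exists_approx_inverse (by positivity) (E ⊔ ℝ ∙ x') hg
  set E' := F'.map g ⊔ (E ⊔ ℝ ∙ x')
  have hEE' : E ≤ E' := le_sup_left.trans le_sup_right
  have hgE' : ∀ z ∈ F', g z ∈ E' := fun z hz => mem_sup_left (mem_map_of_mem hz)
  have hy' : y' ∈ F' := mem_sup_right (mem_span_singleton_self y')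
  have hx' : x' ∈ E' := mem_sup_right (mem_sup_right (mem_span_singleton_self x'))
  refine ⟨E', f', inferInstance, hf', hEE', hx', fun x hx => ?_, g y', hgE' y' hy', ?_⟩
  · have hfxF' : f x ∈ F' := mem_sup_left (mem_map_of_mem hx)
    have hδx : δ * (δ * ‖x‖) ≤ 1 / 4 * (δ * ‖x‖) :=
      mul_le_mul_of_nonneg_right hδ' (mul_nonneg hδ.le (norm_nonneg x))
    have hfx : ‖f x‖ ≤ 5 / 4 * ‖x‖ := by
      nlinarith [hf.norm_apply_le hx, mul_le_mul_of_nonneg_right hδ' (norm_nonneg x)]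
    have hgfx : ‖g (f x)‖ ≤ 2 * ‖x‖ := by
      nlinarith [hg.norm_apply_le hfxF', mul_le_mul_of_nonneg_right hδ' (norm_nonneg (f x)),
        norm_nonneg x]
    have h₁ : ‖x - g (f x)‖ ≤ 15 * δ * ‖x‖ := by
      rw [norm_sub_rev]
      exact (hgf x hx).trans (by nlinarith)
    have h₂ : ‖f' (x - g (f x))‖ ≤ 17 * δ * ‖x‖ :=
      (hf'.norm_apply_le (sub_mem (hEE' hx) (hgE' _ hfxF'))).trans
        (by nlinarith [mul_le_mul_of_nonneg_left h₁ (by positivity : (0 : ℝ) ≤ 1 + δ / 2),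
          mul_nonneg hδ.le (norm_nonneg x)])
    have h₃ : ‖f' (g (f x)) - f x‖ ≤ δ * ‖x‖ :=
      (hf'g (f x) hfxF').trans (by nlinarith)
    calc ‖f' x - f x‖ = ‖f' (x - g (f x)) + (f' (g (f x)) - f x)‖ := by
          rw [map_sub]; abel_nf
      _ ≤ ‖f' (x - g (f x))‖ + ‖f' (g (f x)) - f x‖ := norm_add_le _ _
      _ ≤ 20 * δ * ‖x‖ := by linarith [mul_nonneg hδ.le (norm_nonneg x)]
  · have hgy : ‖g y'‖ ≤ 2 * ‖y'‖ := by
      nlinarith [hg.norm_apply_le hy', mul_le_mul_of_nonneg_right hδ' (norm_nonneg y'),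
        norm_nonneg y']
    exact ⟨(hf'g y' hy').trans (by nlinarith), hgy⟩

theorem exists_seq_of_forall_exists {α : Type*} {P : ℕ → α → Prop} {R : ℕ → α → α → Prop}
    {a : α} (ha : P 0 a) (h : ∀ n a, P n a → ∃ b, P (n + 1) b ∧ R n a b) :
    ∃ s : ℕ → α, ∀ n, P n (s n) ∧ R n (s n) (s (n + 1)) := by
  choose! next hnext using h
  let s : ℕ → α := fun n => Nat.rec a next n
  have hs : ∀ n, P n (s n) := fun n => Nat.rec ha (fun n ih => (hnext n _ ih).1) n
  exact ⟨s, fun n => ⟨hs n, (hnext n _ (hs n)).2⟩⟩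

namespace BackAndForth

-- starts at the `1 / 4` allowed by `exists_backAndForth_step` and halves as that step does
noncomputable def tol (n : ℕ) : ℝ := 2⁻¹ ^ n / 4

theorem tol_pos (n : ℕ) : 0 < tol n := by unfold tol; positivity

theorem tol_le_quarter (n : ℕ) : tol n ≤ 1 / 4 := by
  unfold tol; gcongr; exact pow_le_one₀ (by norm_num) (by norm_num)

theorem tol_succ (n : ℕ) : tol (n + 1) = tol n / 2 := by
  unfold tol; ring

theorem tol_antitone : Antitone tol := fun _ _ hmn =>
  div_le_div_of_nonneg_right (pow_le_pow_of_le_one (by norm_num) (by norm_num) hmn) (by norm_num)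

theorem tendsto_tol : Tendsto tol atTop (𝓝 0) := by
  have h := (tendsto_pow_atTop_nhds_zero_of_lt_one (r := (2⁻¹ : ℝ)) (by norm_num)
    (by norm_num)).div_const 4
  rwa [zero_div] at h

end BackAndForth

open BackAndForth in
structure BackAndForth {X G : Type*} [NormedAddCommGroup X] [NormedSpace ℝ X]
    [NormedAddCommGroup G] [NormedSpace ℝ G] (xs : ℕ → X) (ys : ℕ → G) where
  E : ℕ → Submodule ℝ X
  f : ℕ → X →ₗ[ℝ] G
  isEpsIsometryOn (n : ℕ) : IsEpsIsometryOn (tol n) (f n) (E n)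
  le_succ (n : ℕ) : E n ≤ E (n + 1)
  mem_succ (n : ℕ) : xs n ∈ E (n + 1)
  norm_succ_sub_le (n : ℕ) : ∀ x ∈ E n, ‖f (n + 1) x - f n x‖ ≤ 20 * tol n * ‖x‖
  exists_near (n : ℕ) : ∃ w ∈ E (n + 1), ‖f (n + 1) w - ys n‖ ≤ tol n * ‖ys n‖ ∧ ‖w‖ ≤ 2 * ‖ys n‖

namespace BackAndForth

variable {X G : Type*} [NormedAddCommGroup X] [NormedSpace ℝ X]
  [NormedAddCommGroup G] [NormedSpace ℝ G] {xs : ℕ → X} {ys : ℕ → G}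

theorem nonempty (hG : IsGurariy G) (hXG : AlmostIsometric X G) (xs : ℕ → X) (ys : ℕ → G) :
    Nonempty (BackAndForth xs ys) := by
  have hstep : ∀ n (s : Submodule ℝ X × (X →ₗ[ℝ] G)),
      FiniteDimensional ℝ s.1 ∧ IsEpsIsometryOn (tol n) s.2 s.1 →
      ∃ t : Submodule ℝ X × (X →ₗ[ℝ] G),
        (FiniteDimensional ℝ t.1 ∧ IsEpsIsometryOn (tol (n + 1)) t.2 t.1) ∧
        (s.1 ≤ t.1 ∧ xs n ∈ t.1 ∧ (∀ x ∈ s.1, ‖t.2 x - s.2 x‖ ≤ 20 * tol n * ‖x‖) ∧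
          ∃ w ∈ t.1, ‖t.2 w - ys n‖ ≤ tol n * ‖ys n‖ ∧ ‖w‖ ≤ 2 * ‖ys n‖) := by
    rintro n s ⟨_, hsf⟩
    obtain ⟨E', f', hE', hf', hstep⟩ :=
      exists_backAndForth_step hG hXG (tol_pos n) (tol_le_quarter n) hsf (xs n) (ys n)
    exact ⟨(E', f'), ⟨hE', by rwa [tol_succ]⟩, hstep⟩
  have hbot : IsEpsIsometryOn (tol 0) (0 : X →ₗ[ℝ] G) (⊥ : Submodule ℝ X) := by
    intro x hx
    simp [(mem_bot ℝ).1 hx]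
  obtain ⟨s, hs⟩ := exists_seq_of_forall_exists (a := ((⊥ : Submodule ℝ X), 0))
    ⟨inferInstance, hbot⟩ hstep
  exact ⟨⟨fun n => (s n).1, fun n => (s n).2, fun n => (hs n).1.2, fun n => (hs n).2.1,
    fun n => (hs n).2.2.1, fun n => (hs n).2.2.2.1, fun n => (hs n).2.2.2.2⟩⟩

variable (S : BackAndForth xs ys)

def domain : Submodule ℝ X := ⨆ n, S.E n

theorem monotone : Monotone S.E := monotone_nat_of_le_succ S.le_succ

theorem mem_domain_iff {x : X} : x ∈ S.domain ↔ ∃ n, x ∈ S.E n :=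
  mem_iSup_of_directed _ S.monotone.directed_le

theorem le_domain (n : ℕ) : S.E n ≤ S.domain := le_iSup S.E n

theorem dense_domain (hxs : DenseRange xs) : Dense (S.domain : Set X) :=
  hxs.mono (range_subset_iff.2 fun n => S.le_domain (n + 1) (S.mem_succ n))

/-- The drifts `20 * tol k` sum to at most twice the first one. -/
theorem norm_sub_le {m n : ℕ} (hmn : m ≤ n) {x : X} (hx : x ∈ S.E m) :
    ‖S.f n x - S.f m x‖ ≤ 40 * tol m * ‖x‖ := by
  rw [← dist_eq_norm, dist_comm]
  refine (dist_le_Ico_sum_of_dist_le (f := fun k => S.f k x) hmn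
    (d := fun k => 5 * ‖x‖ * 2⁻¹ ^ k) fun hk _ => ?_).trans ?_
  · rw [dist_comm, dist_eq_norm]
    refine (S.norm_succ_sub_le _ x (S.monotone hk hx)).trans (le_of_eq ?_)
    unfold tol; ring
  · rw [← Finset.mul_sum]
    calc 5 * ‖x‖ * ∑ k ∈ Finset.Ico m n, (2⁻¹ : ℝ) ^ k ≤ 5 * ‖x‖ * (2⁻¹ ^ m / (1 - 2⁻¹)) := by
          gcongr; exact geom_sum_Ico_le_of_lt_one (by norm_num) (by norm_num)
      _ = 40 * tol m * ‖x‖ := by unfold tol; ring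

theorem cauchySeq {x : X} (hx : x ∈ S.domain) : CauchySeq fun n => S.f n x := by
  obtain ⟨m, hm⟩ := S.mem_domain_iff.1 hx
  refine (cauchySeq_shift m).1 (cauchySeq_of_le_tendsto_0' (s := fun n => S.f (n + m) x)
    (fun n => 40 * tol (n + m) * ‖x‖) (fun n k hnk => ?_) ?_)
  · rw [dist_comm, dist_eq_norm]
    exact S.norm_sub_le (by omega) (S.monotone (Nat.le_add_left m n) hm)
  · simpa using ((tendsto_tol.comp (tendsto_add_atTop_nat m)).const_mul 40).mul_const ‖x‖

variable [CompleteSpace G]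

noncomputable def limit : S.domain →ₗ[ℝ] G :=
  linearMapOfTendsto _ (fun n => S.f n ∘ₗ S.domain.subtype)
    (tendsto_pi_nhds.2 fun d => (S.cauchySeq d.2).tendsto_limUnder)

theorem tendsto_limit (d : S.domain) : Tendsto (fun n => S.f n d) atTop (𝓝 (S.limit d)) :=
  (S.cauchySeq d.2).tendsto_limUnder

theorem norm_limit_sub_le {m : ℕ} {x : X} (hx : x ∈ S.E m) :
    ‖S.limit ⟨x, S.le_domain m hx⟩ - S.f m x‖ ≤ 40 * tol m * ‖x‖ :=
  le_of_tendsto ((S.tendsto_limit _).sub_const _).norm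
    ((eventually_ge_atTop m).mono fun _ hn => S.norm_sub_le hn hx)

theorem norm_limit (d : S.domain) : ‖S.limit d‖ = ‖d‖ := by
  obtain ⟨m, hm⟩ := S.mem_domain_iff.1 d.2
  have hfac : Tendsto (fun n => 1 + tol n) atTop (𝓝 1) := by
    simpa using tendsto_tol.const_add 1
  refine tendsto_nhds_unique (S.tendsto_limit d).norm
    (tendsto_of_tendsto_of_tendsto_of_le_of_le'
      (by simpa using (hfac.inv₀ one_ne_zero).mul_const ‖d‖) (by simpa using hfac.mul_const ‖d‖)
      ?_ ?_)
  · exact (eventually_ge_atTop m).mono fun n hn => (S.isEpsIsometryOn n d (S.monotone hn hm)).1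
  · exact (eventually_ge_atTop m).mono fun n hn => (S.isEpsIsometryOn n d (S.monotone hn hm)).2

theorem denseRange_limit {y₀ : ℕ → G} (hy₀ : DenseRange y₀) (hys : ∀ k N, ∃ n ≥ N, ys n = y₀ k) :
    DenseRange S.limit := by
  have hsub : ∀ k, y₀ k ∈ closure (range S.limit) := by
    intro k
    refine Metric.mem_closure_iff.2 fun ε hε => ?_
    obtain ⟨N, hN⟩ := (((tendsto_tol.const_mul 41).mul_const ‖y₀ k‖).eventually
      (gt_mem_nhds (by simpa using hε))).exists
    obtain ⟨n, hnN, hn⟩ := hys k N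
    obtain ⟨w, hw, hfw, hw₂⟩ := S.exists_near n
    rw [hn] at hfw hw₂
    refine ⟨_, mem_range_self ⟨w, S.le_domain _ hw⟩, ?_⟩
    have hL := S.norm_limit_sub_le hw
    rw [tol_succ] at hL
    have htol := tol_antitone hnN
    calc dist (y₀ k) (S.limit ⟨w, _⟩)
        ≤ ‖S.limit ⟨w, _⟩ - S.f (n + 1) w‖ + ‖S.f (n + 1) w - y₀ k‖ := by
          rw [dist_comm, dist_eq_norm]; exact norm_sub_le_norm_sub_add_norm_sub _ _ _
      _ ≤ 41 * tol N * ‖y₀ k‖ := by nlinarith [norm_nonneg (y₀ k), tol_pos n]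
      _ < ε := hN
  exact dense_closure.1 (hy₀.mono (range_subset_iff.2 hsub))

end BackAndForth

theorem exists_linearIsometryEquiv_of_dense {X G : Type*} [NormedAddCommGroup X]
    [NormedSpace ℝ X] [CompleteSpace X] [NormedAddCommGroup G] [NormedSpace ℝ G] [CompleteSpace G]
    {D : Submodule ℝ X} (hD : Dense (D : Set X)) (L : D →ₗ[ℝ] G) (hL : ∀ d, ‖L d‖ = ‖d‖)
    (hL_dense : DenseRange L) : Nonempty (X ≃ₗᵢ[ℝ] G) := by
  have hinj : Function.Injective L :=
    (injective_iff_map_eq_zero L).2 fun d hd => norm_eq_zero.1 (by rw [← hL, hd, norm_zero])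
  refine ⟨(LinearEquiv.ofInjective L hinj).extendOfIsometry D.subtype (LinearMap.range L).subtype
    ?_ ?_ fun d => ?_⟩
  · simpa [DenseRange] using hD
  · rwa [DenseRange, coe_subtype, Subtype.range_coe, LinearMap.coe_range]
  · simp [hL]

/-- If a Banach space `X` is almost isometric to a separable Gurariy space `G`,
then `X` is isometrically isomorphic to `G`: there is a surjective linear isometry
from `X` onto `G`. -/
theorem almost_isometric_to_separable_gurariy_isometric
    (X : Type*) [NormedAddCommGroup X] [NormedSpace ℝ X] [CompleteSpace X]
    (G : Type*) [NormedAddCommGroup G] [NormedSpace ℝ G] [CompleteSpace G]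
    [SeparableSpace G] (hG : IsGurariy G) (h : AlmostIsometric X G) :
    ∃ T : X →ₗ[ℝ] G, Function.Surjective T ∧ ∀ x : X, ‖T x‖ = ‖x‖ := by
  have := h.separableSpace
  obtain ⟨xs, hxs⟩ := exists_dense_seq X
  obtain ⟨y₀, hy₀⟩ := exists_dense_seq G
  -- every `y₀ k` is offered to the construction infinitely often
  obtain ⟨S⟩ := BackAndForth.nonempty hG h xs fun n => y₀ n.unpair.1
  obtain ⟨e⟩ := exists_linearIsometryEquiv_of_dense (S.dense_domain hxs) S.limit S.norm_limit
    (S.denseRange_limit hy₀ fun k N => ⟨Nat.pair k N, Nat.right_le_pair k N, by simp⟩)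
  exact ⟨e.toLinearEquiv.toLinearMap, e.surjective, e.norm_map⟩
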